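/- arXiv:1910.05826 — 6 statements merged into one kernel-verified Lean document; each statement's English description precedes it below -/
import Mathlib

section
/- An arrangement of N hyperplanes in ℝᵖ has at most ζ(N,p) = Σ_{i=0}^{p} C(N,i) full-dimensional cells, i.e., the complement of the union of N hyperplanes in ℝᵖ has at most Σ_{i=0}^{p} C(N,i) connected components. -/
/-!
The sign vector of a point off all hyperplanes is locally constant, and the points with a given
sign vector form an intersection of open half-spaces, which is convex. So the connected
components inject into the set of realized sign patterns, and it suffices to count those.

Remove the hyperplane `f 0 = 0`. A pattern `τ` of the remaining `N` hyperplanes extends to at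
most two patterns, and to two only if `τ` is realized on both sides of `f 0 = 0`; then it is also
realized on the hyperplane itself (walk along a segment), i.e. by the arrangement the others cut
out on that hyperplane, whose dimension is one less. Pascal's rule closes the induction.
-/

open Set

def openRay (s : Bool) : Set ℝ := if s then Ioi 0 else Iio 0

lemma convex_openRay (s : Bool) : Convex ℝ (openRay s) := by
  cases s
  · exact convex_Iio 0
  · exact convex_Ioi 0

lemma mem_openRay_decide_iff {y : ℝ} : y ∈ openRay (decide (0 < y)) ↔ y ≠ 0 := by
  rcases lt_trichotomy y 0 with h | rfl | h
  · simp [openRay, h, h.ne, not_lt.2 h.le]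
  · simp [openRay]
  · simp [openRay, h, h.ne']

lemma ne_zero_of_mem_openRay {y : ℝ} {s : Bool} (h : y ∈ openRay s) : y ≠ 0 := by
  cases s
  · exact ne_of_lt h
  · exact ne_of_gt h

def cellPatterns {ι X F : Type*} [FunLike F X ℝ] (f : ι → F) : Set (ι → Bool) :=
  {σ | ∃ x, ∀ i, f i x ∈ openRay (σ i)}

def crossingPatterns {n : ℕ} {X F : Type*} [FunLike F X ℝ] (f : Fin (n + 1) → F) :
    Set (Fin n → Bool) :=
  {τ | Fin.cons true τ ∈ cellPatterns f ∧ Fin.cons false τ ∈ cellPatterns f}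

lemma ncard_eq_ncard_cons_true_add_ncard_cons_false {n : ℕ} (S : Set (Fin (n + 1) → Bool)) :
    S.ncard = {τ | Fin.cons true τ ∈ S}.ncard + {τ | Fin.cons false τ ∈ S}.ncard := by
  have hS : S = Fin.cons true '' {τ | Fin.cons true τ ∈ S} ∪
      Fin.cons false '' {τ | Fin.cons false τ ∈ S} := by
    ext σ
    rw [← Fin.cons_self_tail σ]
    cases σ 0 <;> simp [(Fin.cons_right_injective _).eq_iff]
  conv_lhs => rw [hS]
  rw [ncard_union_eq, ncard_image_of_injective _ (Fin.cons_right_injective _),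
    ncard_image_of_injective _ (Fin.cons_right_injective _)]
  refine disjoint_iff_forall_ne.2 ?_
  rintro _ ⟨τ, -, rfl⟩ _ ⟨τ', -, rfl⟩ h
  simpa using congrFun h 0

lemma sum_range_choose_succ (N d : ℕ) :
    ∑ i ∈ Finset.range (d + 1), (N + 1).choose i =
      ∑ i ∈ Finset.range (d + 1), N.choose i + ∑ i ∈ Finset.range d, N.choose i := by
  rw [Finset.sum_range_succ' _ d, Finset.sum_range_succ' (N.choose ·) d]
  simp only [Nat.choose_succ_succ', Finset.sum_add_distrib, Nat.choose_zero_right]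
  omega

section Counting

variable {X F : Type*} [FunLike F X ℝ] {n : ℕ}

lemma mem_cellPatterns_tail_of_cons_mem {f : Fin (n + 1) → F} {s : Bool} {τ : Fin n → Bool}
    (h : Fin.cons s τ ∈ cellPatterns f) : τ ∈ cellPatterns (Fin.tail f) := by
  obtain ⟨x, hx⟩ := h
  exact ⟨x, fun i ↦ by simpa [Fin.tail] using hx i.succ⟩

lemma ncard_cellPatterns_le_ncard_tail_add (f : Fin (n + 1) → F) :
    (cellPatterns f).ncard ≤
      (cellPatterns (Fin.tail f)).ncard + (crossingPatterns f).ncard := by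
  rw [ncard_eq_ncard_cons_true_add_ncard_cons_false, ← ncard_union_add_ncard_inter]
  exact add_le_add_left (ncard_le_ncard (union_subset (fun _ ↦ mem_cellPatterns_tail_of_cons_mem)
    fun _ ↦ mem_cellPatterns_tail_of_cons_mem)) _

end Counting

section Affine

open Module

variable {V P : Type*} [AddCommGroup V] [Module ℝ V] [AddTorsor V P] {n : ℕ}

lemma exists_lineMap_eq_zero {a b : ℝ} (ha : 0 < a) (hb : b < 0) :
    ∃ t ∈ Icc (0 : ℝ) 1, AffineMap.lineMap a b t = 0 := by
  have hab : 0 < a - b := by linarith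
  refine ⟨a / (a - b), ⟨by positivity, (div_le_one hab).2 (by linarith)⟩, ?_⟩
  have := hab.ne'
  rw [AffineMap.lineMap_apply_ring']
  field_simp
  ring

lemma crossingPatterns_eq_empty (f : Fin (n + 1) → P →ᵃ[ℝ] ℝ) (h0 : (f 0).linear = 0) :
    crossingPatterns f = ∅ := by
  obtain ⟨c, hc⟩ := (f 0).linear_eq_zero_iff_exists_const.1 h0
  refine eq_empty_of_forall_notMem fun τ ⟨⟨u, hu⟩, ⟨v, hv⟩⟩ ↦ ?_
  have hu0 := hu 0
  have hv0 := hv 0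
  simp [hc, openRay] at hu0 hv0
  linarith

lemma crossingPatterns_subset_cellPatterns_comp_subtype (f : Fin (n + 1) → P →ᵃ[ℝ] ℝ)
    (H : AffineSubspace ℝ P) [Nonempty H] (hH : ∀ x, f 0 x = 0 → x ∈ H) :
    crossingPatterns f ⊆ cellPatterns fun i ↦ (f i.succ).comp H.subtype := by
  rintro τ ⟨⟨u, hu⟩, ⟨v, hv⟩⟩
  obtain ⟨t, ht, hzero⟩ := exists_lineMap_eq_zero (by simpa [openRay] using hu 0)
    (by simpa [openRay] using hv 0)
  refine ⟨⟨AffineMap.lineMap u v t, hH _ (by rwa [AffineMap.apply_lineMap])⟩, fun i ↦ ?_⟩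
  change f i.succ (AffineMap.lineMap u v t) ∈ _
  rw [AffineMap.apply_lineMap]
  exact (convex_openRay _).lineMap_mem (by simpa using hu i.succ) (by simpa using hv i.succ)
    ht

theorem ncard_cellPatterns_le_sum_choose [FiniteDimensional ℝ V] (f : Fin n → P →ᵃ[ℝ] ℝ) :
    (cellPatterns f).ncard ≤ ∑ i ∈ Finset.range (finrank ℝ V + 1), n.choose i := by
  induction n generalizing V P with
  | zero =>
    calc (cellPatterns f).ncard ≤ Nat.card (Fin 0 → Bool) := ncard_le_card _
      _ ≤ _ := by simp [Finset.sum_range_succ']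
  | succ N ih =>
    refine (ncard_cellPatterns_le_ncard_tail_add _).trans ?_
    have htail := ih (Fin.tail f)
    rcases eq_or_ne (f 0).linear 0 with h0 | h0
    · rw [crossingPatterns_eq_empty f h0, ncard_empty, add_zero]
      exact htail.trans (Finset.sum_le_sum fun i _ ↦ Nat.choose_le_choose i N.le_succ)
    · obtain ⟨x₀, hx₀⟩ : ∃ x₀, f 0 x₀ = 0 :=
        (f 0).linear_surjective_iff.1 (LinearMap.surjective h0) 0
      set H := AffineSubspace.mk' x₀ (LinearMap.ker (f 0).linear)
      have : Nonempty H := ⟨⟨x₀, AffineSubspace.self_mem_mk' _ _⟩⟩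
      have hdim : finrank ℝ H.direction + 1 = finrank ℝ V := by
        rw [AffineSubspace.direction_mk']
        exact Module.Dual.finrank_ker_add_one_of_ne_zero h0
      have hH : ∀ x, f 0 x = 0 → x ∈ H := fun x hx ↦ by
        rw [AffineSubspace.mem_mk', LinearMap.mem_ker, AffineMap.linearMap_vsub, hx, hx₀,
          vsub_self]
      have hcross := (ncard_le_ncard
        (crossingPatterns_subset_cellPatterns_comp_subtype f H hH)).trans (ih _)
      rw [hdim] at hcross
      rw [sum_range_choose_succ]
      exact add_le_add htail hcross

end Affine

lemma continuous_decide_pos {X : Type*} [TopologicalSpace X] {g : X → ℝ} (hg : Continuous g)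
    (h0 : ∀ x, g x ≠ 0) : Continuous (fun x ↦ decide (0 < g x)) := by
  refine continuous_discrete_rng.2 fun s ↦ ?_
  cases s
  · convert isOpen_lt hg continuous_const using 1
    ext x
    simpa using (h0 x).le_iff_lt
  · convert isOpen_lt (continuous_const (y := (0 : ℝ))) hg using 1
    ext x
    simp

section Topology

open scoped Set.Notation

variable {E ι : Type*} [AddCommGroup E] [Module ℝ E] [TopologicalSpace E] [ContinuousAdd E]
  [ContinuousSMul ℝ E]

lemma isPreconnected_cell (f : ι → E →ᵃ[ℝ] ℝ) (σ : ι → Bool) :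
    IsPreconnected ({x | ∀ i, f i x ≠ 0} ↓∩ ⋂ i, f i ⁻¹' openRay (σ i)) := by
  have hsub : ⋂ i, f i ⁻¹' openRay (σ i) ⊆ {x | ∀ i, f i x ≠ 0} := fun x hx i ↦
    ne_zero_of_mem_openRay (mem_iInter.1 hx i)
  rw [← Topology.IsInducing.subtypeVal.isPreconnected_image, image_preimage_eq_inter_range,
    Subtype.range_coe, inter_eq_left.2 hsub]
  exact (convex_iInter fun i ↦ (convex_openRay _).affine_preimage (f i)).isPreconnected

theorem card_connectedComponents_le_ncard_cellPatterns [Finite ι] (f : ι → E →ᵃ[ℝ] ℝ)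
    (hf : ∀ i, Continuous (f i)) :
    Nat.card (ConnectedComponents {x | ∀ i, f i x ≠ 0}) ≤ (cellPatterns f).ncard := by
  set S := {x | ∀ i, f i x ≠ 0}
  have hS (x : S) : ∀ i, f i x ≠ 0 := x.2
  let χ : S → cellPatterns f := fun x ↦
    ⟨fun i ↦ decide (0 < f i x), x, fun i ↦ mem_openRay_decide_iff.2 (hS x i)⟩
  have hχ : Continuous χ := (continuous_pi fun i ↦
    continuous_decide_pos ((hf i).comp continuous_subtype_val) fun x ↦ hS x i).subtype_mk _
  refine Nat.card_le_card_of_injective hχ.connectedComponentsLift fun c c' h ↦ ?_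
  obtain ⟨x, rfl⟩ := ConnectedComponents.surjective_coe c
  obtain ⟨y, rfl⟩ := ConnectedComponents.surjective_coe c'
  rw [hχ.connectedComponentsLift_apply_coe, hχ.connectedComponentsLift_apply_coe] at h
  have hy : ∀ i, f i y ∈ openRay (decide (0 < f i x)) := fun i ↦ by
    rw [show decide (0 < f i x) = decide (0 < f i y) from congrFun (congrArg Subtype.val h) i]
    exact mem_openRay_decide_iff.2 (hS y i)
  refine ConnectedComponents.coe_eq_coe.2 (connectedComponent_eq
    ((isPreconnected_cell f fun i ↦ decide (0 < f i x)).subset_connectedComponent ?_ ?_))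
  · exact mem_iInter.2 fun i ↦ mem_openRay_decide_iff.2 (hS x i)
  · exact mem_iInter.2 hy

end Topology

theorem stmt_9_general {N p : ℕ} (a : Fin N → (Fin p → ℝ)) (b : Fin N → ℝ) :
    Nat.card (ConnectedComponents
      ↥((Set.univ : Set (Fin p → ℝ)) \ ⋃ i, {x | ∑ m, a i m * x m = b i}))
      ≤ ∑ i ∈ Finset.range (p + 1), N.choose i := by
  let f : Fin N → (Fin p → ℝ) →ᵃ[ℝ] ℝ := fun i ↦
    (∑ m, a i m • LinearMap.proj m).toAffineMap - AffineMap.const ℝ _ (b i)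
  have hS : (Set.univ : Set (Fin p → ℝ)) \ ⋃ i, {x | ∑ m, a i m * x m = b i} =
      {x | ∀ i, f i x ≠ 0} := by
    ext x
    simp [f, sub_eq_zero]
  rw [hS]
  calc _ ≤ (cellPatterns f).ncard :=
        card_connectedComponents_le_ncard_cellPatterns f fun i ↦
          (f i).continuous_of_finiteDimensional
    _ ≤ _ := by simpa using ncard_cellPatterns_le_sum_choose f

theorem stmt_9 {N p : ℕ} (a : Fin N → (Fin p → ℝ)) (b : Fin N → ℝ)
    (ha : ∀ i, a i ≠ 0) :
    Nat.card (ConnectedComponents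
      ↥((Set.univ : Set (Fin p → ℝ)) \ ⋃ i, {x | ∑ m, a i m * x m = b i}))
      ≤ ∑ i ∈ Finset.range (p + 1), N.choose i :=
  stmt_9_general a b
end

section
/- The number of distinct strict orderings of residuals realized by points of ℝᵖ, i.e., the number of permutations π such that the set {β : y_{π(1)} − x_{π(1)}ᵀβ < ⋯ < y_{π(n)} − x_{π(n)}ᵀβ} is nonempty, is at most Σ_{i=0}^{p} C(n(n−1)/2, i), in particular O(n^{2p}) for fixed p. -/
/-!
On the cell of a strict ordering π, the set of pairs i < j with rᵢ(β) < rⱼ(β) is the set of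
non-inversions of π, which determines π. So realizable orderings inject into the sign patterns of
the n(n-1)/2 affine functionals β ↦ rⱼ(β) - rᵢ(β) on ℝᵖ, and these patterns form a family of VC
dimension at most p: a linear dependence ∑ g_q a_q = 0 among the linear parts of more than p of
them makes ∑ g_q (c_q + a_q β) independent of β, while the patterns {g > 0} and {g < 0} make it
positive and nonpositive respectively. The Sauer–Shelah lemma then gives the bound.
-/

open Finset Module

section SignPatterns

variable {𝕜 V P : Type*} [Field 𝕜] [AddCommGroup V] [Module 𝕜 V]

lemma sum_mul_apply_eq_of_sum_smul_linear_eq_zero (f : P → V →ᵃ[𝕜] 𝕜) {s : Finset P}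
    {g : P → 𝕜} (hg : ∑ q ∈ s, g q • (f q).linear = 0) (β β' : V) :
    ∑ q ∈ s, g q * f q β = ∑ q ∈ s, g q * f q β' := by
  have hconst : ∀ β, ∑ q ∈ s, g q * f q β = ∑ q ∈ s, g q * f q 0 := fun β => by
    have hlin := congrArg (fun φ : V →ₗ[𝕜] 𝕜 => φ β) hg
    simp only [LinearMap.sum_apply, LinearMap.smul_apply, smul_eq_mul, LinearMap.zero_apply,
      AffineMap.decomp', Pi.sub_apply, mul_sub, sum_sub_distrib] at hlin
    linear_combination hlin
  rw [hconst β, hconst β']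

variable [LinearOrder 𝕜] [Fintype P]

def signPattern (f : P → V →ᵃ[𝕜] 𝕜) (β : V) : Finset P := {q | 0 < f q β}

variable [DecidableEq P]

lemma exists_pos_iff_pos_of_shatters (f : P → V →ᵃ[𝕜] 𝕜) {𝒜 : Finset (Finset P)}
    (h𝒜 : (𝒜 : Set (Finset P)) ⊆ Set.range (signPattern f)) {s : Finset P}
    (hs : 𝒜.Shatters s) (g : P → 𝕜) : ∃ β, ∀ q ∈ s, 0 < g q ↔ 0 < f q β := by
  obtain ⟨u, hu𝒜, hsu⟩ := hs (filter_subset (fun q => 0 < g q) s)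
  obtain ⟨β, rfl⟩ := h𝒜 hu𝒜
  refine ⟨β, fun q hq => ?_⟩
  have hmem := congrArg (q ∈ ·) hsu
  simpa [signPattern, hq] using hmem.symm

variable [IsStrictOrderedRing 𝕜]

lemma mul_nonneg_of_pos_iff_pos {a b : 𝕜} (h : 0 < a ↔ 0 < b) : 0 ≤ a * b := by
  rcases lt_or_ge 0 a with ha | ha
  · exact (mul_pos ha (h.1 ha)).le
  · exact mul_nonneg_of_nonpos_of_nonpos ha (not_lt.1 (mt h.2 ha.not_gt))

lemma card_le_finrank_of_shatters [FiniteDimensional 𝕜 V] (f : P → V →ᵃ[𝕜] 𝕜)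
    {𝒜 : Finset (Finset P)} (h𝒜 : (𝒜 : Set (Finset P)) ⊆ Set.range (signPattern f))
    {s : Finset P} (hs : 𝒜.Shatters s) : #s ≤ finrank 𝕜 V := by
  by_contra! hlt
  have hdep : ¬ LinearIndepOn 𝕜 (fun q => (f q).linear) (s : Set P) := fun hind => by
    have hcard : #s ≤ finrank 𝕜 V := by simpa using hind.fintype_card_le_finrank
    omega
  obtain ⟨g, hg, q₀, hq₀s, hq₀⟩ := not_linearIndepOn_finset_iff.1 hdep
  wlog hpos : 0 < g q₀ generalizing g
  · refine this (-g) ?_ (neg_ne_zero.2 hq₀) (neg_pos.2 (lt_of_le_of_ne (not_lt.1 hpos) hq₀))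
    simp only [Pi.neg_apply, neg_smul, sum_neg_distrib, hg, neg_zero]
  obtain ⟨βpos, hβpos⟩ := exists_pos_iff_pos_of_shatters f h𝒜 hs g
  obtain ⟨βneg, hβneg⟩ := exists_pos_iff_pos_of_shatters f h𝒜 hs (-g)
  have hpos_sum : 0 < ∑ q ∈ s, g q * f q βpos :=
    sum_pos' (fun q hq => mul_nonneg_of_pos_iff_pos (hβpos q hq))
      ⟨q₀, hq₀s, mul_pos hpos ((hβpos q₀ hq₀s).1 hpos)⟩
  have hnonpos_sum : 0 ≤ ∑ q ∈ s, -g q * f q βneg :=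
    sum_nonneg fun q hq => mul_nonneg_of_pos_iff_pos (hβneg q hq)
  rw [sum_mul_apply_eq_of_sum_smul_linear_eq_zero f hg βpos βneg] at hpos_sum
  simp only [neg_mul, sum_neg_distrib] at hnonpos_sum
  linarith

lemma vcDim_le_finrank [FiniteDimensional 𝕜 V] (f : P → V →ᵃ[𝕜] 𝕜) {𝒜 : Finset (Finset P)}
    (h𝒜 : (𝒜 : Set (Finset P)) ⊆ Set.range (signPattern f)) : 𝒜.vcDim ≤ finrank 𝕜 V :=
  Finset.sup_le fun _ hs => card_le_finrank_of_shatters f h𝒜 (mem_shatterer.1 hs)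

theorem ncard_range_signPattern_le [FiniteDimensional 𝕜 V] (f : P → V →ᵃ[𝕜] 𝕜) :
    (Set.range (signPattern f)).ncard ≤
      ∑ k ∈ range (finrank 𝕜 V + 1), (Fintype.card P).choose k := by
  set 𝒜 := (Set.toFinite (Set.range (signPattern f))).toFinset
  have h𝒜 : (𝒜 : Set (Finset P)) ⊆ Set.range (signPattern f) := by simp [𝒜]
  calc (Set.range (signPattern f)).ncard = #𝒜 := Set.ncard_eq_toFinset_card _ _
    _ ≤ #𝒜.shatterer := card_le_card_shatterer 𝒜
    _ ≤ ∑ k ∈ Iic 𝒜.vcDim, (Fintype.card P).choose k := card_shatterer_le_sum_vcDim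
    _ ≤ ∑ k ∈ Iic (finrank 𝕜 V), (Fintype.card P).choose k :=
      sum_le_sum_of_subset (Iic_subset_Iic.2 (vcDim_le_finrank f h𝒜))
    _ = _ := by rw [Nat.range_succ_eq_Iic]

end SignPatterns

section Orderings

variable {ι : Type*} [LinearOrder ι]

lemma Equiv.Perm.eq_of_lt_iff_lt [Finite ι] {σ τ : Equiv.Perm ι}
    (h : ∀ i j, i < j → (σ i < σ j ↔ τ i < τ j)) : σ = τ := by
  have hlt : ∀ i j, σ i < σ j ↔ τ i < τ j := fun i j => by
    rcases lt_trichotomy i j with hij | rfl | hij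
    · exact h i j hij
    · simp
    · rw [← not_iff_not, not_lt, not_lt, le_iff_lt_or_eq, le_iff_lt_or_eq, h j i hij,
        σ.injective.eq_iff, τ.injective.eq_iff, eq_comm]
  have hmono : StrictMono (τ.symm.trans σ) := fun a b hab => by
    simpa [hlt] using hab
  have hid := Subsingleton.elim (hmono.orderIsoOfSurjective _ (Equiv.surjective _))
    (OrderIso.refl ι)
  ext i
  simpa using congrArg (fun e : ι ≃o ι => e (τ i)) hid

lemma lt_iff_symm_lt_symm_of_strictMono {α : Type*} [Preorder α] {σ : Equiv.Perm ι} {r : ι → α}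
    (hr : StrictMono (fun i => r (σ i))) (i j : ι) : r i < r j ↔ σ.symm i < σ.symm j := by
  simpa using hr.lt_iff_lt (a := σ.symm i) (b := σ.symm j)

variable [Fintype ι]

def Equiv.Perm.nonInversions (σ : Equiv.Perm ι) : Finset {q : ι × ι // q.1 < q.2} :=
  {q | σ.symm q.1.1 < σ.symm q.1.2}

lemma Equiv.Perm.nonInversions_injective :
    Function.Injective (Equiv.Perm.nonInversions (ι := ι)) := fun σ τ hστ => by
  refine Equiv.symm_bijective.injective (Equiv.Perm.eq_of_lt_iff_lt fun i j hij => ?_)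
  simpa [Equiv.Perm.nonInversions] using congrArg (⟨(i, j), hij⟩ ∈ ·) hστ

variable {𝕜 V : Type*} [Field 𝕜] [LinearOrder 𝕜] [IsStrictOrderedRing 𝕜]
  [AddCommGroup V] [Module 𝕜 V] [FiniteDimensional 𝕜 V]

theorem ncard_realizable_orderings_le (r : V →ᵃ[𝕜] (ι → 𝕜)) :
    {σ : Equiv.Perm ι | ∃ β, StrictMono (fun i => r β (σ i))}.ncard ≤
      ∑ k ∈ range (finrank 𝕜 V + 1), ((Fintype.card ι).choose 2).choose k := by
  let f : {q : ι × ι // q.1 < q.2} → V →ᵃ[𝕜] 𝕜 := fun q =>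
    (AffineMap.proj q.1.2).comp r - (AffineMap.proj q.1.1).comp r
  have hcell : ∀ (σ : Equiv.Perm ι) β, StrictMono (fun i => r β (σ i)) →
      signPattern f β = σ.nonInversions := fun σ β hβ => by
    ext q
    simp [signPattern, f, Equiv.Perm.nonInversions, ← lt_iff_symm_lt_symm_of_strictMono hβ]
  have hcard : Fintype.card {q : ι × ι // q.1 < q.2} = (Fintype.card ι).choose 2 := by
    rw [Fintype.card_subtype, Fintype.card_product_filter_lt]
  calc _ ≤ (Set.range (signPattern f)).ncard :=
        Set.ncard_le_ncard_of_injOn Equiv.Perm.nonInversions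
          (fun σ hσ => hσ.elim fun β hβ => ⟨β, hcell σ β hβ⟩)
          Equiv.Perm.nonInversions_injective.injOn
    _ ≤ _ := hcard ▸ ncard_range_signPattern_le f

end Orderings

theorem stmt_10_general {n p : ℕ} (X : Matrix (Fin n) (Fin p) ℝ) (y : Fin n → ℝ) :
    Set.ncard {π : Equiv.Perm (Fin n) |
        Set.Nonempty {β : Fin p → ℝ | ∀ i j : Fin n, i < j →
          y (π i) - ∑ m, X (π i) m * β m < y (π j) - ∑ m, X (π j) m * β m}}
      ≤ ∑ i ∈ Finset.range (p + 1), (n * (n - 1) / 2).choose i := by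
  let r : (Fin p → ℝ) →ᵃ[ℝ] (Fin n → ℝ) := AffineMap.const ℝ _ y - X.mulVecLin.toAffineMap
  have hr : ∀ β i, r β i = y i - ∑ m, X i m * β m := fun β i => by
    simp [r, Matrix.mulVec, dotProduct]
  calc _ = {σ : Equiv.Perm (Fin n) | ∃ β, StrictMono (fun i => r β (σ i))}.ncard := by
        simp only [hr, StrictMono, Set.Nonempty, Set.mem_ofPred_eq]
    _ ≤ _ := ncard_realizable_orderings_le r
    _ = _ := by rw [Module.finrank_fin_fun, Fintype.card_fin, Nat.choose_two_right]

theorem stmt_10 {n p : ℕ} (X : Matrix (Fin n) (Fin p) ℝ) (y : Fin n → ℝ)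
    (hrows : ∀ i j : Fin n, X i = X j → y i = y j → i = j) :
    Set.ncard {π : Equiv.Perm (Fin n) |
        Set.Nonempty {β : Fin p → ℝ | ∀ i j : Fin n, i < j →
          y (π i) - ∑ m, X (π i) m * β m < y (π j) - ∑ m, X (π j) m * β m}}
      ≤ ∑ i ∈ Finset.range (p + 1), (n * (n - 1) / 2).choose i :=
  stmt_10_general X y
end

section
/- Let β, β' ∈ ℝᵖ lie in open cells of the arrangement, and suppose the line segment from β to β' crosses the hyperplane H_{kℓ} = {γ : r^γ_k = r^γ_ℓ} at an interior point β''. If there exists j with r^β_k < r^β_j < r^β_ℓ, then the segment from β to β'' also intersects H_{kj} or H_{jℓ}. -/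
/-! Along the segment from `β` to `β''`, the residual `r j` starts strictly between `r k` and
`r ℓ` and ends on one side of their common value, so by the intermediate value theorem it meets
`r k` or `r ℓ` on the way. -/

theorem IsPreconnected.exists_eq_or_eq_of_lt_of_lt {X α : Type*} [TopologicalSpace X]
    [LinearOrder α] [TopologicalSpace α] [OrderClosedTopology α] {s : Set X}
    (hs : IsPreconnected s) {a b : X} (ha : a ∈ s) (hb : b ∈ s) {f g h : X → α}
    (hf : ContinuousOn f s) (hg : ContinuousOn g s) (hh : ContinuousOn h s)
    (hfg : f a < g a) (hgh : g a < h a) (hfh : f b = h b) :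
    ∃ x ∈ s, f x = g x ∨ g x = h x := by
  rcases le_total (g b) (f b) with hgf | hfg'
  · obtain ⟨x, hx, hx_eq⟩ := hs.intermediate_value₂ ha hb hf hg hfg.le hgf
    exact ⟨x, hx, Or.inl hx_eq⟩
  · obtain ⟨x, hx, hx_eq⟩ := hs.intermediate_value₂ ha hb hg hh hgh.le (hfh ▸ hfg')
    exact ⟨x, hx, Or.inr hx_eq⟩

theorem stmt_11_general {n p : ℕ} (X : Matrix (Fin n) (Fin p) ℝ) (y : Fin n → ℝ)
    (r : (Fin p → ℝ) → Fin n → ℝ)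
    (hr : ∀ γ i, r γ i = y i - ∑ m, X i m * γ m)
    (β β'' : Fin p → ℝ)
    (k ℓ j : Fin n)
    (hcross : r β'' k = r β'' ℓ)
    (h1 : r β k < r β j) (h2 : r β j < r β ℓ) :
    ∃ γ ∈ segment ℝ β β'', r γ k = r γ j ∨ r γ j = r γ ℓ := by
  have hr_cont : ∀ i, Continuous fun γ => r γ i := fun i => by
    simp only [hr]
    fun_prop
  exact (convex_segment β β'').isPreconnected.exists_eq_or_eq_of_lt_of_lt
    (left_mem_segment ℝ β β'') (right_mem_segment ℝ β β'') (hr_cont k).continuousOn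
    (hr_cont j).continuousOn (hr_cont ℓ).continuousOn h1 h2 hcross

theorem stmt_11 {n p : ℕ} (X : Matrix (Fin n) (Fin p) ℝ) (y : Fin n → ℝ)
    (r : (Fin p → ℝ) → Fin n → ℝ)
    (hr : ∀ γ i, r γ i = y i - ∑ m, X i m * γ m)
    (β β' β'' : Fin p → ℝ) (hseg : β'' ∈ segment ℝ β β')
    (k ℓ j : Fin n)
    (hcross : r β'' k = r β'' ℓ)
    (h1 : r β k < r β j) (h2 : r β j < r β ℓ) :
    ∃ γ ∈ segment ℝ β β'', r γ k = r γ j ∨ r γ j = r γ ℓ :=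
  stmt_11_general X y r hr β β'' k ℓ j hcross h1 h2
end

section
/- If the segment between interior points of two neighboring cells crosses exactly one hyperplane of the arrangement, then that hyperplane is of the form H_{π(k),π(k+1)} for some k ∈ {1,…,n−1}, where π is the permutation ordering the residuals at the starting point; i.e., every tight hyperplane of a cell C^π separates residuals that are adjacent in the ordering π. -/
/-!
Let `i < j` be the positions of `a` and `b` in `π`. Were there a position `m` strictly between
them, then at the starting point `r (π m)` lies strictly between `r a` and `r b`, while at the
crossing point `r a = r b`. So `r (π m)` must meet `r a` or `r b` somewhere on the segment
(intermediate value theorem on the connected segment), i.e. the segment crosses a second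
hyperplane `H_{π m, a}` or `H_{π m, b}`.
-/

open Set

theorem IsPreconnected.exists_eq_or_eq_of_le_of_le {X α : Type*} [TopologicalSpace X]
    [LinearOrder α] [TopologicalSpace α] [OrderClosedTopology α] {s : Set X}
    (hs : IsPreconnected s) {x z : X} (hx : x ∈ s) (hz : z ∈ s) {f g h : X → α}
    (hf : ContinuousOn f s) (hg : ContinuousOn g s) (hh : ContinuousOn h s)
    (hfh : f x ≤ h x) (hhg : h x ≤ g x) (hfg : f z = g z) :
    ∃ w ∈ s, h w = f w ∨ h w = g w := by
  rcases le_total (h z) (f z) with hzf | hfz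
  · obtain ⟨w, hw, hfhw⟩ := hs.intermediate_value₂ hx hz hf hh hfh hzf
    exact ⟨w, hw, Or.inl hfhw.symm⟩
  · obtain ⟨w, hw, hhgw⟩ := hs.intermediate_value₂ hx hz hh hg hhg (hfg ▸ hfz)
    exact ⟨w, hw, Or.inr hhgw⟩

theorem Equiv.Perm.symm_apply_covBy_of_crossing_mem_pair {ι E : Type*} [LinearOrder ι]
    [TopologicalSpace E] {s : Set E} (hs : IsPreconnected s) (r : E → ι → ℝ)
    (hr : ∀ c, ContinuousOn (fun γ ↦ r γ c) s) (π : Equiv.Perm ι) {β γ : E}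
    (hβ : β ∈ s) (hγ : γ ∈ s) (hβπ : StrictMono fun i ↦ r β (π i)) {a b : ι}
    (hγab : r γ a = r γ b) (hab : π.symm a < π.symm b)
    (honly : ∀ c d, c ≠ d → (∃ w ∈ s, r w c = r w d) → c = a ∨ c = b) :
    π.symm a ⋖ π.symm b := by
  refine ⟨hab, fun m ham hmb ↦ ?_⟩
  have hma : π m ≠ a := fun h ↦ ham.ne' (π.eq_symm_apply.mpr h)
  have hmb' : π m ≠ b := fun h ↦ hmb.ne (π.eq_symm_apply.mpr h)
  have hlo : r β a ≤ r β (π m) := by simpa using (hβπ ham).le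
  have hhi : r β (π m) ≤ r β b := by simpa using (hβπ hmb).le
  obtain ⟨w, hw, hwa | hwb⟩ :=
    hs.exists_eq_or_eq_of_le_of_le hβ hγ (hr a) (hr b) (hr (π m)) hlo hhi hγab
  · exact (honly _ _ hma ⟨w, hw, hwa⟩).elim hma hmb'
  · exact (honly _ _ hmb' ⟨w, hw, hwb⟩).elim hma hmb'

theorem stmt_12 {n p : ℕ} (X : Matrix (Fin n) (Fin p) ℝ) (y : Fin n → ℝ)
    (r : (Fin p → ℝ) → Fin n → ℝ)
    (hr : ∀ γ i, r γ i = y i - ∑ m, X i m * γ m)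
    (π : Equiv.Perm (Fin n)) (β₁ β₂ : Fin p → ℝ)
    -- β₁ is an interior point of the cell C^π : strict ordering of residuals
    (hβ₁ : ∀ i j : Fin n, i < j → r β₁ (π i) < r β₁ (π j))
    (a b : Fin n) (hab : a ≠ b)
    -- the segment β₁–β₂ crosses the hyperplane H_{ab}
    (hcross : ∃ γ ∈ segment ℝ β₁ β₂, r γ a = r γ b)
    -- and it crosses no other hyperplane of the arrangement
    (honly : ∀ c d : Fin n, c ≠ d → (∃ γ ∈ segment ℝ β₁ β₂, r γ c = r γ d) →
      ({c, d} : Set (Fin n)) = {a, b}) :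
    ∃ k : Fin n, ∃ hk : (k : ℕ) + 1 < n,
      ({a, b} : Set (Fin n)) = {π k, π ⟨(k : ℕ) + 1, hk⟩} := by
  wlog hlt : π.symm a < π.symm b generalizing a b
  · obtain ⟨k, hk, hba⟩ := this b a hab.symm
      (by simpa only [eq_comm] using hcross)
      (fun c d hcd hcross' ↦ (honly c d hcd hcross').trans (pair_comm a b))
      ((π.symm.injective.ne hab).lt_or_gt.resolve_left hlt)
    exact ⟨k, hk, (pair_comm a b).trans hba⟩
  have hcont : ∀ c, Continuous fun γ ↦ r γ c := fun c ↦ by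
    simp only [hr]
    fun_prop
  have hmem : ∀ c d, c ≠ d → (∃ γ ∈ segment ℝ β₁ β₂, r γ c = r γ d) → c = a ∨ c = b :=
    fun c d hcd hcd' ↦ (honly c d hcd hcd').subset (mem_insert c _)
  obtain ⟨γ, hγ, hγab⟩ := hcross
  have hcov : (π.symm a : ℕ) + 1 = π.symm b :=
    Nat.covBy_iff_add_one_eq.mp <| Fin.covBy_iff.mp <|
      π.symm_apply_covBy_of_crossing_mem_pair (convex_segment β₁ β₂).isPreconnected r
        (fun c ↦ (hcont c).continuousOn) (left_mem_segment ℝ β₁ β₂) hγ hβ₁ hγab hlt hmem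
  refine ⟨π.symm a, hcov ▸ (π.symm b).isLt, ?_⟩
  rw [show (⟨(π.symm a : ℕ) + 1, _⟩ : Fin n) = π.symm b from Fin.ext hcov]
  simp
end

section
/- Let F(β) = max_{π ∈ S_n} Σᵢ αᵢ (y_{π(i)} − x_{π(i)}ᵀβ) with α nondecreasing, let c ∈ ℝᵖ, let π be a permutation with r^c_{π(1)} ≤ ⋯ ≤ r^c_{π(n)}, and set s = −Σᵢ αᵢ x_{π(i)} and η = Σᵢ αᵢ y_{π(i)}. Then F(c) = cᵀs + η, and for every b ∈ ℝᵖ, F(b) ≥ bᵀs + η. In particular, if bᵀs > cᵀs then F(b) > F(c), so s is a valid separator (subgradient direction). -/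
/-!
`F` is a maximum of affine functions of `β`, one per permutation. By the rearrangement
inequality, at `β = c` the maximum is attained by the permutation `π` that sorts the residuals
like `α`, so the affine function `b ↦ bᵀs + η` belonging to `π` is a minorant of `F` that
touches it at `c`.
-/

open Finset Equiv

section Rearrangement

variable {ι R : Type*} [Fintype ι] [LinearOrder ι]
  [CommRing R] [LinearOrder R] [IsStrictOrderedRing R]

theorem sum_mul_comp_perm_le_of_monotone {α r : ι → R} {π : Perm ι}
    (hα : Monotone α) (hπ : Monotone (r ∘ π)) (σ : Perm ι) :
    ∑ i, α i * r (σ i) ≤ ∑ i, α i * r (π i) := by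
  have h := (hα.monovary hπ).sum_mul_comp_perm_le_sum_mul (σ := π⁻¹ * σ)
  simpa only [Perm.coe_mul, Perm.coe_inv, Function.comp_apply, apply_symm_apply] using h

theorem sup'_sum_mul_comp_perm_eq_of_monotone {α r : ι → R} {π : Perm ι}
    (hα : Monotone α) (hπ : Monotone (r ∘ π)) :
    (univ : Finset (Perm ι)).sup' univ_nonempty (fun σ => ∑ i, α i * r (σ i)) =
      ∑ i, α i * r (π i) :=
  le_antisymm (sup'_le _ _ fun σ _ => sum_mul_comp_perm_le_of_monotone hα hπ σ)
    (le_sup' (fun σ => ∑ i, α i * r (σ i)) (mem_univ π))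

end Rearrangement

theorem sum_mul_sub_sum_mul_eq {ι κ R : Type*} [Fintype ι] [Fintype κ] [CommRing R]
    (α y : ι → R) (A : ι → κ → R) (b : κ → R) :
    ∑ i, α i * (y i - ∑ m, A i m * b m) =
      ∑ m, b m * -∑ i, α i * A i m + ∑ i, α i * y i := by
  simp only [mul_sub, sum_sub_distrib, mul_neg, sum_neg_distrib, mul_sum]
  rw [sum_comm (f := fun i m => α i * (A i m * b m))]
  simp only [mul_left_comm, mul_comm, sub_eq_neg_add]

theorem stmt_15 {n p : ℕ} (X : Matrix (Fin n) (Fin p) ℝ) (y : Fin n → ℝ)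
    (α : Fin n → ℝ) (hα : Monotone α)
    (F : (Fin p → ℝ) → ℝ)
    (hF : ∀ β, F β = (Finset.univ : Finset (Equiv.Perm (Fin n))).sup'
      Finset.univ_nonempty
      (fun σ => ∑ i, α i * (y (σ i) - ∑ m, X (σ i) m * β m)))
    (c : Fin p → ℝ) (π : Equiv.Perm (Fin n))
    (hπ : ∀ i j : Fin n, i ≤ j →
      y (π i) - ∑ m, X (π i) m * c m ≤ y (π j) - ∑ m, X (π j) m * c m)
    (s : Fin p → ℝ) (hs : s = fun m => -∑ i, α i * X (π i) m)
    (η : ℝ) (hη : η = ∑ i, α i * y (π i)) :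
    F c = (∑ m, c m * s m) + η ∧
    (∀ b : Fin p → ℝ, F b ≥ (∑ m, b m * s m) + η) ∧
    (∀ b : Fin p → ℝ, (∑ m, b m * s m) > (∑ m, c m * s m) → F b > F c) := by
  subst hs hη
  have h_affine (b : Fin p → ℝ) :
      ∑ i, α i * (y (π i) - ∑ m, X (π i) m * b m) =
        ∑ m, b m * -∑ i, α i * X (π i) m + ∑ i, α i * y (π i) :=
    sum_mul_sub_sum_mul_eq α (fun i => y (π i)) (fun i => X (π i)) b
  have h_ge (b : Fin p → ℝ) : F b ≥ (∑ m, b m * -∑ i, α i * X (π i) m) + ∑ i, α i * y (π i) := by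
    rw [hF, ← h_affine]
    exact le_sup' (fun σ => ∑ i, α i * (y (σ i) - ∑ m, X (σ i) m * b m)) (mem_univ π)
  have h_eq : F c = (∑ m, c m * -∑ i, α i * X (π i) m) + ∑ i, α i * y (π i) := by
    rw [hF, ← h_affine]
    exact sup'_sum_mul_comp_perm_eq_of_monotone (r := fun k => y k - ∑ m, X k m * c m) hα
      fun i j => hπ i j
  refine ⟨h_eq, h_ge, fun b hb => ?_⟩
  calc F c < (∑ m, b m * -∑ i, α i * X (π i) m) + ∑ i, α i * y (π i) := by
        rw [h_eq]; exact add_lt_add_left hb _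
    _ ≤ F b := h_ge b
end

section
/- Let f : ℝᵖ → ℝ be a pointwise maximum of finitely many affine functions (hence convex and piecewise linear). If f is bounded below on a convex polyhedron P = {β : Wβ ≤ z} and P is nonempty, then f attains its minimum on P. -/
/-!
Fourier–Motzkin elimination shows that the projection of a polyhedron along a coordinate is
again a polyhedron. Since `f` is a maximum of affine functions, `{(t, β) | β ∈ P, f β ≤ t}` is a
polyhedron, so its projection `{t | ∃ β ∈ P, f β ≤ t}` is a polyhedron in `ℝ`, hence closed. Being
nonempty and bounded below, it contains its infimum, which is then a value of `f` on `P`.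
-/

open Finset

theorem Finset.exists_between_of_forall_le {α : Type*} [LinearOrder α] [Nonempty α]
    {s t : Finset α} (h : ∀ x ∈ s, ∀ y ∈ t, x ≤ y) :
    ∃ c, (∀ x ∈ s, x ≤ c) ∧ ∀ y ∈ t, c ≤ y := by
  rcases s.eq_empty_or_nonempty with rfl | hs
  · rcases t.eq_empty_or_nonempty with rfl | ht
    · exact ⟨Classical.arbitrary α, by simp, by simp⟩
    · exact ⟨t.min' ht, by simp, fun y hy => t.min'_le y hy⟩
  · exact ⟨s.max' hs, fun x hx => s.le_max' x hx,
      fun y hy => s.max'_le hs _ fun x hx => h x hx y hy⟩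

section Polyhedral

variable {𝕜 E : Type*} [Field 𝕜] [LinearOrder 𝕜]

theorem exists_forall_mul_le_iff [IsStrictOrderedRing 𝕜] {ι : Type*} (I : Finset ι)
    (a c : ι → 𝕜) :
    (∃ s, ∀ i ∈ I, a i * s ≤ c i) ↔
      (∀ i ∈ I, a i = 0 → 0 ≤ c i) ∧
        ∀ i ∈ I, ∀ j ∈ I, 0 < a i → a j < 0 → a j * c i ≤ a i * c j := by
  classical
  constructor
  · rintro ⟨s, hs⟩
    refine ⟨fun i hi hai => by simpa [hai] using hs i hi, fun i hi j hj hai haj => ?_⟩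
    nlinarith [mul_le_mul_of_nonneg_left (hs i hi) (neg_nonneg.2 haj.le),
      mul_le_mul_of_nonneg_left (hs j hj) hai.le]
  · rintro ⟨hzero, hpair⟩
    obtain ⟨s, hlower, hupper⟩ := Finset.exists_between_of_forall_le
      (s := (I.filter (a · < 0)).image fun j => c j / a j)
      (t := (I.filter (0 < a ·)).image fun i => c i / a i) (by
        simp only [forall_mem_image, mem_filter]
        rintro j ⟨hj, haj⟩ i ⟨hi, hai⟩
        rw [div_le_iff_of_neg haj, div_mul_eq_mul_div, div_le_iff₀ hai]
        linarith [hpair i hi j hj hai haj])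
    simp only [forall_mem_image, mem_filter] at hlower hupper
    refine ⟨s, fun i hi => ?_⟩
    rcases lt_trichotomy (a i) 0 with hai | hai | hai
    · have := hlower ⟨hi, hai⟩
      rwa [div_le_iff_of_neg hai, mul_comm] at this
    · simpa [hai] using hzero i hi hai
    · have := hupper ⟨hi, hai⟩
      rwa [le_div_iff₀ hai, mul_comm] at this

variable (𝕜) [AddCommGroup E] [Module 𝕜 E]

def IsPolyhedral (S : Set E) : Prop :=
  ∃ H : Finset (Module.Dual 𝕜 E × 𝕜), S = {x | ∀ h ∈ H, h.1 x ≤ h.2}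

variable {𝕜}

theorem isPolyhedral_setOf_forall_le {ι : Type*} [Fintype ι] (ℓ : ι → Module.Dual 𝕜 E)
    (d : ι → 𝕜) : IsPolyhedral 𝕜 {x | ∀ i, ℓ i x ≤ d i} := by
  classical
  exact ⟨univ.image fun i => (ℓ i, d i), by simp⟩

theorem IsPolyhedral.inter {S T : Set E} (hS : IsPolyhedral 𝕜 S) (hT : IsPolyhedral 𝕜 T) :
    IsPolyhedral 𝕜 (S ∩ T) := by
  classical
  obtain ⟨H, rfl⟩ := hS
  obtain ⟨K, rfl⟩ := hT
  exact ⟨H ∪ K, by ext; simp only [Set.mem_inter_iff, Set.mem_ofPred_eq, forall_mem_union]⟩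

theorem IsPolyhedral.preimage {F : Type*} [AddCommGroup F] [Module 𝕜 F] {S : Set E}
    (hS : IsPolyhedral 𝕜 S) (g : F →ₗ[𝕜] E) : IsPolyhedral 𝕜 (g ⁻¹' S) := by
  classical
  obtain ⟨H, rfl⟩ := hS
  exact ⟨H.image fun h => (h.1 ∘ₗ g, h.2), by
    ext; simp only [Set.mem_preimage, Set.mem_ofPred_eq, forall_mem_image, LinearMap.comp_apply]⟩

theorem IsPolyhedral.image_fst [IsStrictOrderedRing 𝕜] {S : Set (E × 𝕜)}
    (hS : IsPolyhedral 𝕜 S) : IsPolyhedral 𝕜 (Prod.fst '' S) := by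
  classical
  obtain ⟨H, rfl⟩ := hS
  set γ : Module.Dual 𝕜 (E × 𝕜) → 𝕜 := fun ℓ => ℓ (0, 1)
  set ℓ : Module.Dual 𝕜 (E × 𝕜) → Module.Dual 𝕜 E := fun ℓ => ℓ ∘ₗ LinearMap.inl 𝕜 E 𝕜
  -- keep the constraints not involving the last coordinate, and cancel it in every pair of
  -- constraints whose coefficients `γ` have opposite signs
  refine ⟨(H.filter (γ ·.1 = 0)).image (fun h => (ℓ h.1, h.2)) ∪
    ((H ×ˢ H).filter fun q => 0 < γ q.1.1 ∧ γ q.2.1 < 0).image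
      (fun q => (γ q.1.1 • ℓ q.2.1 - γ q.2.1 • ℓ q.1.1, γ q.1.1 * q.2.2 - γ q.2.1 * q.1.2)), ?_⟩
  ext x
  have hsplit : ∀ (h : Module.Dual 𝕜 (E × 𝕜)) s, h (x, s) = ℓ h x + γ h * s := by
    intro h s
    have : (x, s) = (x, 0) + s • ((0 : E), (1 : 𝕜)) := by simp
    rw [this, map_add, map_smul, smul_eq_mul, mul_comm]
    rfl
  have hfiber : x ∈ Prod.fst '' {y | ∀ h ∈ H, h.1 y ≤ h.2} ↔
      ∃ s, ∀ h ∈ H, γ h.1 * s ≤ h.2 - ℓ h.1 x := by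
    simp only [Set.mem_image, Set.mem_ofPred_eq, Prod.exists, exists_and_right, exists_eq_right,
      hsplit, le_sub_iff_add_le']
  rw [hfiber, exists_forall_mul_le_iff]
  simp only [Set.mem_ofPred_eq, forall_mem_union, forall_mem_image, mem_filter, mem_product,
    Prod.forall, and_imp, sub_nonneg, LinearMap.sub_apply, LinearMap.smul_apply, smul_eq_mul]
  have hrearrange : ∀ a b c d e f : 𝕜,
      b * (c - d) ≤ a * (e - f) ↔ a * f - b * d ≤ a * e - b * c := by
    intros; constructor <;> intro <;> linarith
  simp only [hrearrange]
  exact and_congr_right' ⟨fun h _ _ _ _ hq hq' => h _ _ hq _ _ hq',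
    fun h _ _ hq _ _ hq' => h _ _ _ _ hq hq'⟩

theorem IsPolyhedral.image_fst_pi [IsStrictOrderedRing 𝕜] {n : ℕ} {S : Set (E × (Fin n → 𝕜))}
    (hS : IsPolyhedral 𝕜 S) : IsPolyhedral 𝕜 (Prod.fst '' S) := by
  induction n generalizing E with
  | zero =>
    convert hS.preimage (LinearMap.inl 𝕜 E (Fin 0 → 𝕜)) using 1
    ext x
    simp only [Set.mem_image, Set.mem_preimage, LinearMap.inl_apply, Prod.exists,
      exists_and_right, exists_eq_right]
    exact ⟨fun ⟨v, hv⟩ => Subsingleton.elim v 0 ▸ hv, fun h => ⟨0, h⟩⟩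
  | succ n ih =>
    let g := (LinearEquiv.prodAssoc 𝕜 E (Fin n → 𝕜) 𝕜).trans ((LinearEquiv.refl 𝕜 E).prodCongr
      ((LinearEquiv.prodComm 𝕜 _ 𝕜).trans (Fin.consLinearEquiv 𝕜 fun _ => 𝕜)))
    convert ih (hS.preimage g.toLinearMap).image_fst using 1
    calc Prod.fst '' S = Prod.fst '' (g '' (g ⁻¹' S)) := by
          rw [Set.image_preimage_eq S g.surjective]
      _ = _ := by rw [Set.image_image, Set.image_image]; rfl

end Polyhedral

theorem IsPolyhedral.isClosed {E : Type*} [AddCommGroup E] [Module ℝ E] [TopologicalSpace E]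
    [IsTopologicalAddGroup E] [ContinuousSMul ℝ E] [T2Space E] [FiniteDimensional ℝ E]
    {S : Set E} (hS : IsPolyhedral ℝ S) : IsClosed S := by
  obtain ⟨H, rfl⟩ := hS
  simp only [Set.ofPred_forall]
  exact isClosed_biInter fun h _ =>
    isClosed_le h.1.continuous_of_finiteDimensional continuous_const

theorem stmt_19 {p k : ℕ} {J : Type*} [Fintype J] [Nonempty J]
    (a : J → (Fin p → ℝ)) (b : J → ℝ)
    (W : Matrix (Fin k) (Fin p) ℝ) (z : Fin k → ℝ)
    (f : (Fin p → ℝ) → ℝ)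
    (hf : ∀ β, f β = (Finset.univ : Finset J).sup' Finset.univ_nonempty
      (fun j => (∑ m, a j m * β m) + b j))
    (P : Set (Fin p → ℝ))
    (hP : P = {β | ∀ i : Fin k, ∑ m, W i m * β m ≤ z i})
    (hne : P.Nonempty) (hbdd : BddBelow (f '' P)) :
    ∃ β₀ ∈ P, ∀ β ∈ P, f β₀ ≤ f β := by
  set S : Set (ℝ × (Fin p → ℝ)) := {q | q.2 ∈ P ∧ f q.2 ≤ q.1}
  have hS : IsPolyhedral ℝ S := by
    convert (isPolyhedral_setOf_forall_le
      (fun i => dotProductBilin ℝ ℝ (W i) ∘ₗ LinearMap.snd ℝ ℝ _) z).inter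
      (isPolyhedral_setOf_forall_le
        (fun j => dotProductBilin ℝ ℝ (a j) ∘ₗ LinearMap.snd ℝ ℝ _ - LinearMap.fst ℝ ℝ _)
        (fun j => -b j)) using 1
    ext ⟨t, β⟩
    simp [S, hP, hf, Finset.sup'_le_iff, dotProduct, add_comm]
  have hmem : ∀ β ∈ P, f β ∈ Prod.fst '' S := fun β hβ => ⟨(f β, β), ⟨hβ, le_rfl⟩, rfl⟩
  have hbddS : BddBelow (Prod.fst '' S) := by
    obtain ⟨m, hm⟩ := hbdd
    exact ⟨m, by
      rintro _ ⟨⟨t, β⟩, ⟨hβ, hft⟩, rfl⟩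
      exact (hm ⟨β, hβ, rfl⟩).trans hft⟩
  obtain ⟨β₁, hβ₁⟩ := hne
  obtain ⟨⟨t₀, β₀⟩, ⟨hβ₀, hft₀⟩, ht₀⟩ :=
    hS.image_fst_pi.isClosed.csInf_mem ⟨_, hmem β₁ hβ₁⟩ hbddS
  exact ⟨β₀, hβ₀, fun β hβ => hft₀.trans (ht₀ ▸ csInf_le hbddS (hmem β hβ))⟩
end
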